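/- arXiv:1006.0505 — 2 statements merged into one kernel-verified Lean document; each statement's English description precedes it below -/
import Mathlib

section
/- For each p ∈ (-1,∞), the ratio (λ_p(s) − λ_p(0))/s² tends to (p/2)·λ_p(0) as s tends to 0 through nonzero values. -/
open MeasureTheory ProbabilityTheory Real Set Filter Topology

/-- The standard Gaussian measure `N(0,1)` on `ℝ`. -/
noncomputable def γ : Measure ℝ := gaussianReal 0 1

/-- `λ_p(s) = E|Z+s|^p` for a standard normal `Z`. -/
noncomputable def lam (p s : ℝ) : ℝ := ∫ z, |z + s| ^ p ∂γ

/-!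
By the Cameron–Martin formula, `λ_p(s) = E[e^{sZ - s²/2} |Z|^p]`, and `E[Z |Z|^p] = 0` by symmetry,
so `(λ_p(s) - λ_p(0))/s² = E[(e^{sZ - s²/2} - 1 - sZ)/s² · |Z|^p]`. For `|s| ≤ 1` the integrand is
dominated by `C e^{2|Z|} |Z|^p`, and it tends pointwise to `(Z² - 1)/2 · |Z|^p`. By dominated
convergence the limit is `(E[Z² |Z|^p] - E|Z|^p)/2`, and the Gamma-function formula
`E|Z|^q = 2^{(q+1)/2} Γ((q+1)/2) / √(2π)` gives `E[Z² |Z|^p] = E|Z|^{p+2} = (p+1) E|Z|^p`.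
-/

lemma gaussianPDFReal_zero_one (x : ℝ) :
    gaussianPDFReal 0 1 x = (√(2 * π))⁻¹ * exp (-x ^ 2 / 2) := by
  simp [gaussianPDFReal]

lemma gaussianPDFReal_zero_one_sub (s x : ℝ) :
    gaussianPDFReal 0 1 (x - s) = exp (s * x - s ^ 2 / 2) * gaussianPDFReal 0 1 x := by
  rw [gaussianPDFReal_zero_one, gaussianPDFReal_zero_one, mul_left_comm, ← exp_add]
  ring_nf

lemma integral_γ_eq_integral_pdf_mul (f : ℝ → ℝ) :
    ∫ x, f x ∂γ = ∫ x, gaussianPDFReal 0 1 x * f x :=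
  integral_gaussianReal_eq_integral_smul one_ne_zero

lemma integral_comp_add_right_γ (f : ℝ → ℝ) (s : ℝ) :
    ∫ z, f (z + s) ∂γ = ∫ x, exp (s * x - s ^ 2 / 2) * f x ∂γ := by
  have h := integral_add_right_eq_self (μ := volume) (fun x ↦ gaussianPDFReal 0 1 (x - s) * f x) s
  simp only [add_sub_cancel_right, gaussianPDFReal_zero_one_sub] at h
  rw [integral_γ_eq_integral_pdf_mul, integral_γ_eq_integral_pdf_mul, h]
  simp_rw [mul_assoc, mul_left_comm]

lemma integral_γ_eq_zero_of_odd {f : ℝ → ℝ} (hf : ∀ x, f (-x) = -f x) :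
    ∫ x, f x ∂γ = 0 := by
  have h := integral_neg_eq_self (fun x ↦ gaussianPDFReal 0 1 x * f x) volume
  simp_rw [hf, gaussianPDFReal_zero_one, neg_sq, mul_neg, integral_neg] at h
  simp_rw [integral_γ_eq_integral_pdf_mul, gaussianPDFReal_zero_one]
  linarith

lemma integrable_γ_iff (f : ℝ → ℝ) :
    Integrable f γ ↔ Integrable (fun x ↦ f x * exp (-x ^ 2 / 2)) := by
  rw [γ, gaussianReal_of_var_ne_zero 0 one_ne_zero, integrable_withDensity_iff
    (measurable_gaussianPDF 0 1) (ae_of_all _ fun _ ↦ gaussianPDF_lt_top)]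
  simp_rw [toReal_gaussianPDF, gaussianPDFReal_zero_one, mul_left_comm _ (√(2 * π))⁻¹]
  exact integrable_const_mul_iff (IsUnit.mk0 _ (by positivity)) _

lemma integrable_abs_rpow_mul_exp_neg_mul_sq {b : ℝ} (hb : 0 < b) {q : ℝ} (hq : -1 < q) :
    Integrable fun x : ℝ ↦ |x| ^ q * exp (-b * x ^ 2) := by
  have hIoi : IntegrableOn (fun x : ℝ ↦ |x| ^ q * exp (-b * x ^ 2)) (Ioi 0) :=
    (integrableOn_rpow_mul_exp_neg_mul_sq hb hq).congr_fun
      (fun x hx ↦ by rw [abs_of_pos hx]) measurableSet_Ioi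
  rw [← integrableOn_univ, ← Iio_union_Ici (a := (0 : ℝ)), integrableOn_union,
    integrableOn_Ici_iff_integrableOn_Ioi]
  refine ⟨?_, hIoi⟩
  rw [← (Measure.measurePreserving_neg (volume : Measure ℝ)).integrableOn_comp_preimage
      (Homeomorph.neg ℝ).measurableEmbedding]
  simpa only [Function.comp_def, neg_preimage, neg_Iio, neg_zero, abs_neg, neg_sq] using hIoi

lemma integrable_abs_rpow_mul_exp_mul_abs_γ {q : ℝ} (hq : -1 < q) (c : ℝ) :
    Integrable (fun x ↦ |x| ^ q * exp (c * |x|)) γ := by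
  rw [integrable_γ_iff]
  refine ((integrable_abs_rpow_mul_exp_neg_mul_sq (b := 1 / 4) (by norm_num) hq).const_mul
    (exp (c ^ 2))).mono' (by fun_prop) (ae_of_all _ fun x ↦ ?_)
  have hexp : exp (c * |x|) * exp (-x ^ 2 / 2) ≤ exp (c ^ 2) * exp (-(1 / 4) * x ^ 2) := by
    rw [← exp_add, ← exp_add, exp_le_exp]
    nlinarith [sq_nonneg (c - |x| / 2), sq_abs x]
  rw [norm_of_nonneg (by positivity)]
  calc |x| ^ q * exp (c * |x|) * exp (-x ^ 2 / 2)
      = |x| ^ q * (exp (c * |x|) * exp (-x ^ 2 / 2)) := mul_assoc _ _ _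
    _ ≤ |x| ^ q * (exp (c ^ 2) * exp (-(1 / 4) * x ^ 2)) := by gcongr
    _ = exp (c ^ 2) * (|x| ^ q * exp (-(1 / 4) * x ^ 2)) := by ring

lemma integrable_abs_rpow_γ {q : ℝ} (hq : -1 < q) : Integrable (fun x ↦ |x| ^ q) γ := by
  simpa using integrable_abs_rpow_mul_exp_mul_abs_γ hq 0

lemma integral_abs_rpow_γ {q : ℝ} (hq : -1 < q) :
    ∫ x, |x| ^ q ∂γ = (√(2 * π))⁻¹ * 2 ^ ((q + 1) / 2) * Gamma ((q + 1) / 2) := by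
  have hhalf : ∫ x in Ioi (0 : ℝ), x ^ q * exp (-(1 / 2) * x ^ (2 : ℝ))
      = 2 ^ ((q + 1) / 2) * (1 / 2) * Gamma ((q + 1) / 2) := by
    rw [integral_rpow_mul_exp_neg_mul_rpow two_pos hq (by norm_num), one_div, inv_rpow zero_le_two,
      ← rpow_neg zero_le_two, neg_div, neg_neg]
  have hrad (x : ℝ) : gaussianPDFReal 0 1 x * |x| ^ q
      = (√(2 * π))⁻¹ * (|x| ^ q * exp (-(1 / 2) * |x| ^ (2 : ℝ))) := by
    rw [gaussianPDFReal_zero_one, rpow_two, sq_abs]; ring_nf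
  simp_rw [integral_γ_eq_integral_pdf_mul, hrad,
    integral_comp_abs (f := fun t ↦ (√(2 * π))⁻¹ * (t ^ q * exp (-(1 / 2) * t ^ (2 : ℝ)))),
    integral_const_mul, hhalf]
  ring

lemma sq_mul_abs_rpow {q : ℝ} (hq : q + 2 ≠ 0) (x : ℝ) : x ^ 2 * |x| ^ q = |x| ^ (q + 2) := by
  rw [rpow_add' (abs_nonneg x) hq, mul_comm, rpow_two, sq_abs]

lemma integral_sq_mul_abs_rpow_γ {q : ℝ} (hq : -1 < q) :
    ∫ x, x ^ 2 * |x| ^ q ∂γ = (q + 1) * ∫ x, |x| ^ q ∂γ := by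
  have hΓ : Gamma ((q + 2 + 1) / 2) = (q + 1) / 2 * Gamma ((q + 1) / 2) := by
    rw [show (q + 2 + 1) / 2 = (q + 1) / 2 + 1 by ring, Gamma_add_one (by linarith)]
  have h2 : (2 : ℝ) ^ ((q + 2 + 1) / 2) = 2 * 2 ^ ((q + 1) / 2) := by
    rw [show (q + 2 + 1) / 2 = 1 + (q + 1) / 2 by ring, rpow_add two_pos, rpow_one]
  simp_rw [sq_mul_abs_rpow (by linarith : q + 2 ≠ 0), integral_abs_rpow_γ hq,
    integral_abs_rpow_γ (by linarith : -1 < q + 2), hΓ, h2]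
  ring

lemma abs_exp_sub_one_sub_id_le_sq_mul_exp_abs (x : ℝ) :
    |exp x - 1 - x| ≤ 2 * x ^ 2 * exp |x| := by
  have h1 : 1 ≤ exp |x| := one_le_exp (abs_nonneg x)
  rcases le_or_gt |x| 1 with hx | hx
  · nlinarith [abs_exp_sub_one_sub_id_le hx, sq_nonneg x]
  · have hx2 : 1 < x ^ 2 := by nlinarith [sq_abs x, abs_nonneg x]
    have hexp : exp x ≤ exp |x| := exp_le_exp.2 (le_abs_self x)
    have hlin : |x| + 1 ≤ exp |x| := add_one_le_exp |x|
    calc |exp x - 1 - x| ≤ exp x + 1 + |x| := by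
          rw [abs_le]; constructor <;> linarith [exp_pos x, neg_abs_le x, le_abs_self x]
      _ ≤ 2 * exp |x| := by linarith
      _ ≤ 2 * x ^ 2 * exp |x| := by nlinarith

lemma abs_exp_sub_one_sub_id_sub_sq_div_two_le {x : ℝ} (hx : |x| ≤ 1) :
    |exp x - 1 - x - x ^ 2 / 2| ≤ |x| ^ 3 := by
  have h := Real.exp_bound hx (n := 3) (by norm_num)
  norm_num [Finset.sum_range_succ, Nat.factorial] at h
  calc |exp x - 1 - x - x ^ 2 / 2| = |exp x - (1 + x + x ^ 2 / 2)| := by ring_nf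
    _ ≤ |x| ^ 3 * (2 / 9) := h
    _ ≤ |x| ^ 3 := by nlinarith [pow_nonneg (abs_nonneg x) 3]

lemma tendsto_exp_mul_sub_one_sub_div_sq (u : ℝ) :
    Tendsto (fun s ↦ (exp (s * u - s ^ 2 / 2) - 1 - s * u) / s ^ 2) (𝓝[≠] 0)
      (𝓝 ((u ^ 2 - 1) / 2)) := by
  set G : ℝ → ℝ := fun s ↦ ((u - s / 2) ^ 2 - 1) / 2
  have hG : Tendsto G (𝓝[≠] 0) (𝓝 ((u ^ 2 - 1) / 2)) := by
    simpa [G] using ((by fun_prop : Continuous G).tendsto 0).mono_left nhdsWithin_le_nhds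
  have hbound : Tendsto (fun s ↦ |s| * |u - s / 2| ^ 3) (𝓝[≠] 0) (𝓝 0) := by
    simpa using ((by fun_prop : Continuous fun s ↦ |s| * |u - s / 2| ^ 3).tendsto 0).mono_left
      nhdsWithin_le_nhds
  have hsmall : ∀ᶠ s in 𝓝[≠] (0 : ℝ), |s * u - s ^ 2 / 2| ≤ 1 := by
    have h : Tendsto (fun s ↦ |s * u - s ^ 2 / 2|) (𝓝[≠] 0) (𝓝 0) := by
      simpa using ((by fun_prop : Continuous fun s ↦ |s * u - s ^ 2 / 2|).tendsto 0).mono_left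
        nhdsWithin_le_nhds
    exact h.eventually (ge_mem_nhds one_pos)
  have hrem : Tendsto (fun s ↦ (exp (s * u - s ^ 2 / 2) - 1 - s * u) / s ^ 2 - G s) (𝓝[≠] 0)
      (𝓝 0) := by
    -- With `x = s u - s²/2` one has `G s = x²/(2 s²) - 1/2`, so the difference below is the
    -- second-order Taylor remainder of `exp` at `x`, divided by `s²`.
    refine squeeze_zero_norm' ?_ hbound
    filter_upwards [self_mem_nhdsWithin, hsmall] with s (hs : s ≠ 0) hx
    have hs2 : 0 < s ^ 2 := by positivity
    have hsplit : (exp (s * u - s ^ 2 / 2) - 1 - s * u) / s ^ 2 - G s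
        = (exp (s * u - s ^ 2 / 2) - 1 - (s * u - s ^ 2 / 2) - (s * u - s ^ 2 / 2) ^ 2 / 2)
          / s ^ 2 := by
      simp only [G]; field_simp; ring
    have hcube : |s * u - s ^ 2 / 2| ^ 3 = s ^ 2 * (|s| * |u - s / 2| ^ 3) := by
      rw [show s * u - s ^ 2 / 2 = s * (u - s / 2) by ring, abs_mul, mul_pow, ← sq_abs s]; ring
    rw [hsplit, norm_div, norm_of_nonneg hs2.le, div_le_iff₀' hs2, Real.norm_eq_abs, ← hcube]
    exact abs_exp_sub_one_sub_id_sub_sq_div_two_le hx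
  simpa using hrem.add hG

lemma abs_exp_mul_sub_one_sub_div_sq_le {s : ℝ} (hs1 : |s| ≤ 1) (u : ℝ) :
    |(exp (s * u - s ^ 2 / 2) - 1 - s * u) / s ^ 2| ≤ 5 * exp 2 * exp (2 * |u|) := by
  rcases eq_or_ne s 0 with rfl | hs
  · simp only [ne_eq, OfNat.ofNat_ne_zero, not_false_eq_true, zero_pow, div_zero, abs_zero]
    positivity
  set x := s * u - s ^ 2 / 2
  set y := |u| + 1
  have hs2 : 0 < s ^ 2 := by positivity
  have hshift : |u - s / 2| ≤ y := by
    have := abs_sub u (s / 2); rw [abs_div, abs_two] at this; simp only [y]; linarith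
  have hx : |x| ≤ y := by
    rw [show x = s * (u - s / 2) by ring, abs_mul]
    nlinarith [abs_nonneg s, abs_nonneg (u - s / 2)]
  have hy0 : 0 ≤ y := by positivity
  have hy2 : y ^ 2 ≤ 2 * exp y := by linarith [quadratic_le_exp_of_nonneg hy0]
  have hratio : |exp x - 1 - x| / s ^ 2 ≤ 2 * y ^ 2 * exp y := by
    rw [div_le_iff₀ hs2]
    calc |exp x - 1 - x| ≤ 2 * x ^ 2 * exp |x| := abs_exp_sub_one_sub_id_le_sq_mul_exp_abs x
      _ = 2 * (u - s / 2) ^ 2 * exp |x| * s ^ 2 := by simp only [x]; ring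
      _ ≤ 2 * y ^ 2 * exp y * s ^ 2 := by
        gcongr 2 * ?_ * ?_ * _
        · rw [← sq_abs]; gcongr
        · exact exp_le_exp.2 hx
  have hsplit : (exp x - 1 - s * u) / s ^ 2 = (exp x - 1 - x) / s ^ 2 - 1 / 2 := by
    simp only [x]; field_simp; ring
  have hexp : exp 2 * exp (2 * |u|) = exp y * exp y := by
    rw [← exp_add, ← exp_add]; simp only [y]; ring_nf
  have h1 : 1 ≤ exp y := one_le_exp (by positivity)
  rw [hsplit, mul_assoc, hexp]
  calc |(exp x - 1 - x) / s ^ 2 - 1 / 2| ≤ |exp x - 1 - x| / s ^ 2 + 1 / 2 := by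
        rw [← abs_of_pos hs2, ← abs_div, abs_of_pos hs2]
        exact (abs_sub _ _).trans (by norm_num)
    _ ≤ 2 * (2 * exp y) * exp y + 1 / 2 := by gcongr; exact hratio.trans (by gcongr)
    _ ≤ 5 * (exp y * exp y) := by nlinarith

lemma lam_eq_integral_exp_mul (p s : ℝ) :
    lam p s = ∫ x, exp (s * x - s ^ 2 / 2) * |x| ^ p ∂γ :=
  integral_comp_add_right_γ (fun x ↦ |x| ^ p) s

lemma lam_zero_eq_integral (p : ℝ) : lam p 0 = ∫ x, |x| ^ p ∂γ := by
  simp [lam]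

section

variable {p : ℝ}

lemma integrable_exp_mul_mul_abs_rpow_γ (hp : -1 < p) (s : ℝ) :
    Integrable (fun x ↦ exp (s * x - s ^ 2 / 2) * |x| ^ p) γ := by
  refine (integrable_abs_rpow_mul_exp_mul_abs_γ hp |s|).mono' (by fun_prop)
    (ae_of_all _ fun x ↦ ?_)
  have hexp : exp (s * x - s ^ 2 / 2) ≤ exp (|s| * |x|) := by
    rw [exp_le_exp, ← abs_mul]; nlinarith [le_abs_self (s * x), sq_nonneg s]
  rw [norm_of_nonneg (by positivity), mul_comm]
  gcongr

lemma integrable_mul_abs_rpow_γ (hp : -1 < p) : Integrable (fun x ↦ x * |x| ^ p) γ := by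
  refine (integrable_abs_rpow_mul_exp_mul_abs_γ hp 1).mono' (by fun_prop)
    (ae_of_all _ fun x ↦ ?_)
  rw [norm_mul, norm_of_nonneg (by positivity : 0 ≤ |x| ^ p), one_mul, mul_comm,
    Real.norm_eq_abs]
  gcongr
  linarith [add_one_le_exp |x|]

lemma lam_sub_lam_zero_div_sq_eq_integral (hp : -1 < p) (s : ℝ) :
    (lam p s - lam p 0) / s ^ 2
      = ∫ x, (exp (s * x - s ^ 2 / 2) - 1 - s * x) / s ^ 2 * |x| ^ p ∂γ := by
  have hodd : ∫ x, x * |x| ^ p ∂γ = 0 :=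
    integral_γ_eq_zero_of_odd fun x ↦ by rw [abs_neg, neg_mul]
  have hexp := integrable_exp_mul_mul_abs_rpow_γ hp s
  have habs := integrable_abs_rpow_γ hp
  have hmul := (integrable_mul_abs_rpow_γ hp).const_mul s
  have hdiff : ∫ x, (exp (s * x - s ^ 2 / 2) * |x| ^ p - |x| ^ p - s * (x * |x| ^ p)) ∂γ
      = lam p s - lam p 0 := by
    rw [integral_sub (f := fun x ↦ _ - _) (hexp.sub habs) hmul, integral_sub hexp habs,
      integral_const_mul, hodd, lam_eq_integral_exp_mul, lam_zero_eq_integral, mul_zero, sub_zero]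
  rw [← hdiff, ← integral_div]
  congr with x
  ring

lemma tendsto_integral_exp_mul_sub_one_sub_div_sq (hp : -1 < p) :
    Tendsto (fun s ↦ ∫ x, (exp (s * x - s ^ 2 / 2) - 1 - s * x) / s ^ 2 * |x| ^ p ∂γ) (𝓝[≠] 0)
      (𝓝 (p / 2 * lam p 0)) := by
  have hlimit : ∫ x, (x ^ 2 - 1) / 2 * |x| ^ p ∂γ = p / 2 * lam p 0 := by
    have habs := integrable_abs_rpow_γ hp
    have hsq : Integrable (fun x ↦ x ^ 2 * |x| ^ p) γ := by
      simpa only [sq_mul_abs_rpow (by linarith : p + 2 ≠ 0)] using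
        integrable_abs_rpow_γ (by linarith : -1 < p + 2)
    simp_rw [div_mul_eq_mul_div, sub_mul, one_mul, integral_div, integral_sub hsq habs,
      integral_sq_mul_abs_rpow_γ hp, lam_zero_eq_integral]
    ring
  rw [← hlimit]
  refine tendsto_integral_filter_of_dominated_convergence
    (fun x ↦ 5 * exp 2 * exp (2 * |x|) * |x| ^ p) (Eventually.of_forall fun s ↦ by fun_prop)
    ?_ ?_ (ae_of_all _ fun x ↦ (tendsto_exp_mul_sub_one_sub_div_sq x).mul_const _)
  · have hs1 : ∀ᶠ s in 𝓝[≠] (0 : ℝ), |s| ≤ 1 :=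
      ((continuous_abs.tendsto' 0 0 abs_zero).mono_left nhdsWithin_le_nhds).eventually
        (ge_mem_nhds one_pos)
    filter_upwards [hs1] with s hs1
    refine ae_of_all _ fun x ↦ ?_
    rw [norm_mul, norm_of_nonneg (by positivity : 0 ≤ |x| ^ p), Real.norm_eq_abs]
    gcongr
    exact abs_exp_mul_sub_one_sub_div_sq_le hs1 x
  · exact ((integrable_abs_rpow_mul_exp_mul_abs_γ hp 2).const_mul (5 * exp 2)).congr
      (ae_of_all _ fun x ↦ by ring)

end

/-- For each `p ∈ (-1,∞)`, `(λ_p(s) − λ_p(0))/s² → (p/2)·λ_p(0)` as `s → 0`, `s ≠ 0`. -/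
theorem stmt5 (p : ℝ) (hp : -1 < p) :
    Filter.Tendsto (fun s : ℝ => (lam p s - lam p 0) / s ^ 2)
      (nhdsWithin 0 {(0 : ℝ)}ᶜ) (nhds (p / 2 * lam p 0)) :=
  (tendsto_integral_exp_mul_sub_one_sub_div_sq hp).congr fun s ↦
    (lam_sub_lam_zero_div_sq_eq_integral hp s).symm
end

section
/- For each natural number d ≥ 1, the function s ↦ μ̃_d(s) is even, continuous, strictly decreasing on [0,∞), and tends to 0 as s → ∞. Moreover, μ̃_d(0)/ln d tends to √(2/π) as d → ∞ (i.e. μ̃_d(0) ∼ 2·φ(0)·ln d), and there is a constant C > 0 such that μ̃_d(s) ≤ C·ln d for all real s and all natural d ≥ 2. -/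
/-!
Write `f = min(|·|⁻¹, d)`, so that `μ̃_d(s) = ∫ f(x) φ(x - s) dx`. Evenness comes from the symmetry
of `f` and `φ`; continuity and the limit at `∞` are dominated convergence, `f` being bounded by `d`.

Strict monotonicity is a one-dimensional rearrangement argument: for `0 ≤ s < t`, put
`m = (s + t) / 2` and `h = (t - s) / 2`. Centring at `m` and folding the integral onto `(0, ∞)` gives
`μ̃_d(s) - μ̃_d(t) = ∫_{u > 0} (f(m - u) - f(m + u)) (φ(u - h) - φ(u + h)) du`, where both factors
are nonnegative (as `|m - u| ≤ m + u` and `|u - h| < u + h`) and both are positive for large `u`.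

For the logarithmic growth, `∫_{-1}^{1} f = 2 (1 + ln d)`. Bounding `φ` by `φ(0)` on `[-1, 1]` and
`f` by `1` outside gives `μ̃_d(s) ≤ 2 φ(0) ln d + 2 φ(0) + 1`; bounding `φ(x)` below by
`φ(0) (1 - x² / 2)` and using `f(x) x² ≤ 1` on `[-1, 1]` gives `2 φ(0) ln d ≤ μ̃_d(0)`.
-/

open MeasureTheory ProbabilityTheory Real Set Filter Topology

/-- `μ̃_d(s) = E min(|Z+s|⁻¹, d)` for a standard normal `Z`. -/
noncomputable def tmu (d : ℕ) (s : ℝ) : ℝ := ∫ z, min |z + s|⁻¹ (d : ℝ) ∂γ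

/-- The standard normal density `φ(x) = (2π)^{-1/2} e^{-x²/2}`. -/
noncomputable def phi (x : ℝ) : ℝ := Real.exp (-x ^ 2 / 2) / Real.sqrt (2 * Real.pi)

lemma integral_eq_integral_Ioi_add_comp_neg {E : Type*} [NormedAddCommGroup E] [NormedSpace ℝ E]
    {g : ℝ → E} (hg : Integrable g) : ∫ x, g x = ∫ x in Ioi 0, (g x + g (-x)) := by
  rw [integral_add hg.integrableOn hg.comp_neg.integrableOn, integral_comp_neg_Ioi, neg_zero,
    ← compl_Ioi, integral_add_compl measurableSet_Ioi hg]

lemma setIntegral_Ioi_pos {H : ℝ → ℝ} {a b : ℝ} (hH : IntegrableOn H (Ioi a))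
    (h_nonneg : ∀ᵐ x ∂volume.restrict (Ioi a), 0 ≤ H x) (h_pos : ∀ x, b < x → 0 < H x) :
    0 < ∫ x in Ioi a, H x := by
  rw [setIntegral_pos_iff_support_of_nonneg_ae h_nonneg hH]
  calc (0 : ENNReal) < volume (Ioi (max a b)) := by simp
    _ ≤ volume (Function.support H ∩ Ioi a) :=
      measure_mono fun x hx =>
        ⟨(h_pos x ((le_max_right a b).trans_lt hx)).ne', (le_max_left a b).trans_lt hx⟩

theorem strictAntiOn_integral_mul_comp_sub {f ρ : ℝ → ℝ} {C R : ℝ}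
    (hf : AEStronglyMeasurable f) (hfC : ∀ x, ‖f x‖ ≤ C)
    (hf_anti : ∀ x y, x ≠ 0 → |x| ≤ |y| → f y ≤ f x)
    (hf_strict : ∀ x y, R ≤ |x| → |x| < |y| → f y < f x)
    (hρ : Integrable ρ) (hρ_neg : ∀ x, ρ (-x) = ρ x)
    (hρ_strict : ∀ x y, |x| < |y| → ρ y < ρ x) :
    StrictAntiOn (fun s => ∫ x, f x * ρ (x - s)) (Ici 0) := by
  intro s hs t ht hst
  simp only [mem_Ici] at hs ht
  set m := (s + t) / 2
  set h := (t - s) / 2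
  have hm : 0 < m := by simp only [m]; linarith
  have hh : 0 < h := by simp only [h]; linarith
  have hI : ∀ a, Integrable (fun x => f x * ρ (x - a)) := fun a =>
    (hρ.comp_sub_right a).bdd_mul hf (ae_of_all _ hfC)
  set g := fun u => f (u + m) * ρ (u + m - s) - f (u + m) * ρ (u + m - t)
  have hg : Integrable g := ((hI s).sub (hI t)).comp_add_right m
  have hfold : ∀ u, g u + g (-u) = (f (m - u) - f (u + m)) * (ρ (u - h) - ρ (u + h)) := by
    intro u
    have h1 : -u + m - s = -(u - h) := by simp only [m, h]; ring
    have h2 : -u + m - t = -(u + h) := by simp only [m, h]; ring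
    have h3 : u + m - s = u + h := by simp only [m, h]; ring
    have h4 : u + m - t = u - h := by simp only [m, h]; ring
    simp only [g]
    rw [h1, h2, h3, h4, hρ_neg, hρ_neg, neg_add_eq_sub]
    ring
  have hdiff : (∫ x, f x * ρ (x - s)) - ∫ x, f x * ρ (x - t)
      = ∫ u in Ioi 0, (f (m - u) - f (u + m)) * (ρ (u - h) - ρ (u + h)) := by
    rw [← integral_sub (hI s) (hI t), ← integral_add_right_eq_self _ m,
      integral_eq_integral_Ioi_add_comp_neg hg]
    simp only [hfold]
  rw [← sub_pos, hdiff]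
  refine setIntegral_Ioi_pos (b := m + max R 0) ?_ ?_ ?_
  · refine ((hg.comp_neg.add hg).congr (ae_of_all _ fun u => ?_)).integrableOn
    simp only [Pi.add_apply, add_comm (g (-u)), hfold]
  · filter_upwards [ae_restrict_of_ae (volume.ae_ne m), ae_restrict_mem measurableSet_Ioi]
      with u hum hu
    have hu : 0 < u := hu
    refine mul_nonneg (sub_nonneg.2 (hf_anti _ _ (sub_ne_zero.2 (Ne.symm hum)) ?_))
      (sub_nonneg.2 (hρ_strict _ _ ?_).le)
    · rw [abs_of_pos (by linarith : 0 < u + m), abs_le]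
      constructor <;> linarith
    · rw [abs_of_pos (by linarith : 0 < u + h), abs_lt]
      constructor <;> linarith
  · intro u hu
    have hR : R ≤ u - m := by linarith [le_max_left R 0]
    have hum : m < u := by linarith [le_max_right R 0]
    refine mul_pos (sub_pos.2 (hf_strict _ _ ?_ ?_)) (sub_pos.2 (hρ_strict _ _ ?_))
    · rwa [abs_sub_comm, abs_of_pos (sub_pos.2 hum)]
    · rw [abs_sub_comm, abs_of_pos (sub_pos.2 hum), abs_of_pos (by linarith)]
      linarith
    · rw [abs_of_pos (by linarith : 0 < u + h), abs_lt]
      constructor <;> linarith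

lemma phi_eq_gaussianPDFReal : phi = gaussianPDFReal 0 1 := by
  ext x
  simp [phi, gaussianPDFReal, div_eq_inv_mul]

lemma phi_pos (x : ℝ) : 0 < phi x := by
  unfold phi
  positivity

lemma integrable_phi : Integrable phi :=
  phi_eq_gaussianPDFReal ▸ integrable_gaussianPDFReal 0 1

lemma integral_phi : ∫ x, phi x = 1 :=
  phi_eq_gaussianPDFReal ▸ integral_gaussianPDFReal_eq_one 0 one_ne_zero

lemma phi_neg (x : ℝ) : phi (-x) = phi x := by
  simp [phi]

lemma phi_lt_phi_of_abs_lt {x y : ℝ} (h : |x| < |y|) : phi y < phi x := by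
  unfold phi
  gcongr rexp (-?_ / 2) / _
  exact sq_lt_sq.2 h

lemma phi_le_phi_zero (x : ℝ) : phi x ≤ phi 0 := by
  unfold phi
  gcongr rexp (-?_ / 2) / _
  simpa using sq_nonneg x

lemma phi_zero_mul_one_sub_le (x : ℝ) : phi 0 * (1 - x ^ 2 / 2) ≤ phi x := by
  have := add_one_le_exp (-x ^ 2 / 2)
  unfold phi
  rw [← mul_div_right_comm]
  gcongr
  simp only [ne_eq, OfNat.ofNat_ne_zero, not_false_eq_true, zero_pow, neg_zero, zero_div, exp_zero]
  linarith

lemma two_mul_phi_zero : 2 * phi 0 = √(2 / π) := by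
  have h2 : √2 * √2 = 2 := mul_self_sqrt zero_le_two
  simp only [phi, ne_eq, OfNat.ofNat_ne_zero, not_false_eq_true, zero_pow, neg_zero, zero_div,
    exp_zero, sqrt_div' _ pi_pos.le, sqrt_mul zero_le_two]
  field_simp
  linarith

instance : IsProbabilityMeasure γ := inferInstanceAs (IsProbabilityMeasure (gaussianReal 0 1))

instance : NullSingletonClass γ := nullSingletonClass_gaussianReal one_ne_zero

lemma integral_gaussian_eq_integral_phi_mul (g : ℝ → ℝ) : ∫ z, g z ∂γ = ∫ z, phi z * g z := by
  rw [γ, integral_gaussianReal_eq_integral_smul one_ne_zero, phi_eq_gaussianPDFReal]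
  rfl

/-- Since `|0|⁻¹ = 0` in Lean, `clippedInv c 0 = 0` rather than `c`; this single point is null. -/
noncomputable def clippedInv (c x : ℝ) : ℝ := min |x|⁻¹ c

section ClippedInv

variable {c x y : ℝ}

lemma clippedInv_nonneg (hc : 0 ≤ c) : 0 ≤ clippedInv c x :=
  le_min (inv_nonneg.2 (abs_nonneg x)) hc

lemma clippedInv_le : clippedInv c x ≤ c := min_le_right _ _

lemma clippedInv_le_inv_abs : clippedInv c x ≤ |x|⁻¹ := min_le_left _ _

lemma norm_clippedInv_le (hc : 0 ≤ c) : ‖clippedInv c x‖ ≤ c := by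
  rw [norm_of_nonneg (clippedInv_nonneg hc)]
  exact clippedInv_le

lemma clippedInv_mul_sq_le : clippedInv c x * x ^ 2 ≤ |x| :=
  calc clippedInv c x * x ^ 2 ≤ |x|⁻¹ * |x| * |x| := by
        rw [mul_assoc, ← sq, sq_abs]
        exact mul_le_mul_of_nonneg_right clippedInv_le_inv_abs (sq_nonneg x)
    _ = |x| := inv_mul_mul_self _

@[simp]
lemma clippedInv_neg : clippedInv c (-x) = clippedInv c x := by
  simp [clippedInv]

@[fun_prop]
lemma measurable_clippedInv : Measurable (clippedInv c) := by
  unfold clippedInv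
  fun_prop

lemma continuousAt_clippedInv (hx : x ≠ 0) : ContinuousAt (clippedInv c) x :=
  (continuous_abs.continuousAt.inv₀ (abs_ne_zero.2 hx)).min continuousAt_const

lemma clippedInv_of_inv_le_abs (hc : 0 < c) (hx : c⁻¹ ≤ |x|) : clippedInv c x = |x|⁻¹ :=
  min_eq_left ((inv_le_comm₀ hc ((inv_pos.2 hc).trans_le hx)).1 hx)

lemma clippedInv_of_abs_le_inv (hc : 0 < c) (hx : 0 < |x|) (hx' : |x| ≤ c⁻¹) :
    clippedInv c x = c :=
  min_eq_right ((le_inv_comm₀ hx hc).1 hx')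

lemma clippedInv_le_clippedInv (hx : x ≠ 0) (h : |x| ≤ |y|) : clippedInv c y ≤ clippedInv c x :=
  min_le_min_right c (inv_anti₀ (abs_pos.2 hx) h)

lemma clippedInv_lt_clippedInv (hc : 0 < c) (hx : c⁻¹ ≤ |x|) (h : |x| < |y|) :
    clippedInv c y < clippedInv c x := by
  rw [clippedInv_of_inv_le_abs hc hx, clippedInv_of_inv_le_abs hc (hx.trans h.le)]
  exact inv_strictAnti₀ ((inv_pos.2 hc).trans_le hx) h

lemma integrableOn_clippedInv_Icc (hc : 0 ≤ c) (a b : ℝ) :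
    IntegrableOn (clippedInv c) (Icc a b) :=
  Integrable.mono' (integrableOn_const measure_Icc_lt_top.ne) (by fun_prop)
    (ae_of_all _ fun _ => norm_clippedInv_le hc)

lemma intervalIntegrable_clippedInv (hc : 0 ≤ c) (a b : ℝ) :
    IntervalIntegrable (clippedInv c) volume a b :=
  (integrableOn_clippedInv_Icc hc _ _).intervalIntegrable

lemma integral_clippedInv_zero_one (hc : 1 ≤ c) : ∫ x in 0..1, clippedInv c x = 1 + log c := by
  have hc0 : 0 < c := zero_lt_one.trans_le hc
  have hc1 : c⁻¹ ≤ 1 := inv_le_one_of_one_le₀ hc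
  have hinner : ∫ x in 0..c⁻¹, clippedInv c x = 1 := by
    rw [intervalIntegral.integral_congr_ae (g := fun _ => c) ?_]
    · simp [hc0.ne']
    · refine ae_of_all _ fun x hx => ?_
      rw [uIoc_of_le (inv_nonneg.2 hc0.le)] at hx
      exact clippedInv_of_abs_le_inv hc0 (abs_pos.2 hx.1.ne') ((abs_of_pos hx.1).trans_le hx.2)
  have houter : ∫ x in c⁻¹..1, clippedInv c x = log c := by
    have h0 : (0 : ℝ) ∉ uIcc c⁻¹ 1 := by
      rw [uIcc_of_le hc1]
      exact fun h => (inv_pos.2 hc0).not_ge h.1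
    rw [intervalIntegral.integral_congr (g := fun x => x⁻¹) ?_, integral_inv h0, div_inv_eq_mul,
      one_mul]
    intro x hx
    rw [uIcc_of_le hc1] at hx
    rw [clippedInv_of_inv_le_abs hc0 (hx.1.trans (le_abs_self x)),
      abs_of_pos ((inv_pos.2 hc0).trans_le hx.1)]
  rw [← intervalIntegral.integral_add_adjacent_intervals (intervalIntegrable_clippedInv hc0.le _ _)
    (intervalIntegrable_clippedInv hc0.le _ _), hinner, houter]

lemma setIntegral_clippedInv_Icc (hc : 1 ≤ c) :
    ∫ x in Icc (-1) 1, clippedInv c x = 2 * (1 + log c) := by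
  have hc0 : 0 ≤ c := zero_le_one.trans hc
  have hleft : ∫ x in (-1)..0, clippedInv c x = ∫ x in 0..1, clippedInv c x := by
    simpa using (intervalIntegral.integral_comp_neg (a := 0) (b := 1) (clippedInv c)).symm
  rw [integral_Icc_eq_integral_Ioc, ← intervalIntegral.integral_of_le (by norm_num),
    ← intervalIntegral.integral_add_adjacent_intervals (b := 0)
      (intervalIntegrable_clippedInv hc0 _ _) (intervalIntegrable_clippedInv hc0 _ _),
    hleft, integral_clippedInv_zero_one hc]
  ring

end ClippedInv

lemma tmu_eq_integral_gaussian (d : ℕ) (s : ℝ) : tmu d s = ∫ z, clippedInv d (z + s) ∂γ := rfl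

lemma tmu_eq_integral_mul_phi (d : ℕ) (s : ℝ) :
    tmu d s = ∫ x, clippedInv d x * phi (x - s) := by
  rw [tmu_eq_integral_gaussian, integral_gaussian_eq_integral_phi_mul,
    ← integral_add_right_eq_self _ (-s)]
  congr with x
  rw [neg_add_cancel_right, mul_comm, sub_eq_add_neg]

lemma integrable_clippedInv_mul_phi (d : ℕ) (s : ℝ) :
    Integrable (fun x => clippedInv d x * phi (x - s)) :=
  (integrable_phi.comp_sub_right s).bdd_mul (by fun_prop)
    (ae_of_all _ fun _ => norm_clippedInv_le d.cast_nonneg)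

lemma tmu_neg (d : ℕ) (s : ℝ) : tmu d (-s) = tmu d s := by
  rw [tmu_eq_integral_mul_phi, tmu_eq_integral_mul_phi, ← integral_neg_eq_self]
  congr with x
  rw [clippedInv_neg, sub_neg_eq_add, neg_add_eq_sub, ← neg_sub, phi_neg]

lemma continuous_tmu (d : ℕ) : Continuous (tmu d) := by
  refine continuous_iff_continuousAt.2 fun s₀ => ?_
  refine continuousAt_of_dominated (bound := fun _ => (d : ℝ)) ?_ ?_ (integrable_const _) ?_
  · exact Eventually.of_forall fun s => by fun_prop
  · exact Eventually.of_forall fun s => ae_of_all _ fun z => norm_clippedInv_le d.cast_nonneg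
  · filter_upwards [γ.ae_ne (-s₀)] with z hz
    exact (continuousAt_clippedInv (by contrapose! hz; linarith)).comp
      (continuous_const_add z).continuousAt

lemma tendsto_tmu_atTop (d : ℕ) : Tendsto (tmu d) atTop (𝓝 0) := by
  rw [← integral_zero ℝ ℝ (μ := γ)]
  refine tendsto_integral_filter_of_dominated_convergence (fun _ => (d : ℝ)) ?_ ?_
    (integrable_const _) ?_
  · exact Eventually.of_forall fun s => by fun_prop
  · exact Eventually.of_forall fun s => ae_of_all _ fun z => norm_clippedInv_le d.cast_nonneg
  · refine ae_of_all _ fun z => ?_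
    have h : Tendsto (fun s => |z + s|⁻¹) atTop (𝓝 0) := tendsto_inv_atTop_zero.comp
      (tendsto_abs_atTop_atTop.comp (tendsto_atTop_add_const_left _ z tendsto_id))
    exact squeeze_zero (fun _ => clippedInv_nonneg d.cast_nonneg)
      (fun _ => clippedInv_le_inv_abs) h

lemma strictAntiOn_tmu {d : ℕ} (hd : 0 < d) : StrictAntiOn (tmu d) (Ici 0) := by
  have hd' : (0 : ℝ) < d := Nat.cast_pos.2 hd
  rw [show tmu d = fun s => ∫ x, clippedInv d x * phi (x - s) from
    funext (tmu_eq_integral_mul_phi d)]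
  exact strictAntiOn_integral_mul_comp_sub (R := (d : ℝ)⁻¹) (by fun_prop)
    (fun _ => norm_clippedInv_le hd'.le) (fun _ _ => clippedInv_le_clippedInv)
    (fun _ _ => clippedInv_lt_clippedInv hd') integrable_phi phi_neg
    (fun _ _ => phi_lt_phi_of_abs_lt)

lemma one_lt_abs_of_notMem_Icc {x : ℝ} (hx : x ∉ Icc (-1 : ℝ) 1) : 1 < |x| := by
  rwa [mem_Icc, ← abs_le, not_le] at hx

lemma tmu_le {d : ℕ} (hd : 1 ≤ d) (s : ℝ) :
    tmu d s ≤ 2 * phi 0 * log d + (2 * phi 0 + 1) := by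
  have hd' : (1 : ℝ) ≤ d := Nat.one_le_cast.2 hd
  have hpt : ∀ x, clippedInv d x * phi (x - s)
      ≤ (Icc (-1) 1).indicator (fun x => phi 0 * clippedInv d x) x + phi (x - s) := by
    intro x
    by_cases hx : x ∈ Icc (-1 : ℝ) 1
    · rw [indicator_of_mem hx, mul_comm (phi 0)]
      have := mul_le_mul_of_nonneg_left (phi_le_phi_zero (x - s))
        (clippedInv_nonneg (x := x) d.cast_nonneg)
      linarith [phi_pos (x - s)]
    · rw [indicator_of_notMem hx, zero_add]
      refine mul_le_of_le_one_left (phi_pos _).le (clippedInv_le_inv_abs.trans ?_)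
      exact inv_le_one_of_one_le₀ (one_lt_abs_of_notMem_Icc hx).le
  have hI : Integrable ((Icc (-1) 1).indicator (fun x => phi 0 * clippedInv d x)) :=
    IntegrableOn.integrable_indicator ((integrableOn_clippedInv_Icc d.cast_nonneg _ _).const_mul _)
      measurableSet_Icc
  calc tmu d s = ∫ x, clippedInv d x * phi (x - s) := tmu_eq_integral_mul_phi d s
    _ ≤ ∫ x, ((Icc (-1) 1).indicator (fun x => phi 0 * clippedInv d x) x + phi (x - s)) :=
      integral_mono (integrable_clippedInv_mul_phi d s)
        (hI.add (integrable_phi.comp_sub_right s)) hpt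
    _ = phi 0 * (2 * (1 + log d)) + 1 := by
      rw [integral_add hI (integrable_phi.comp_sub_right s), integral_indicator measurableSet_Icc,
        integral_const_mul, setIntegral_clippedInv_Icc hd', integral_sub_right_eq_self phi s,
        integral_phi]
    _ = 2 * phi 0 * log d + (2 * phi 0 + 1) := by ring

lemma le_tmu_zero {d : ℕ} (hd : 1 ≤ d) : 2 * phi 0 * log d ≤ tmu d 0 := by
  have hd' : (1 : ℝ) ≤ d := Nat.one_le_cast.2 hd
  have hpt : ∀ x, (Icc (-1) 1).indicator (fun x => phi 0 * (clippedInv d x - 1 / 2)) x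
      ≤ clippedInv d x * phi (x - 0) := by
    intro x
    have hclip := clippedInv_nonneg (c := d) (x := x) d.cast_nonneg
    by_cases hx : x ∈ Icc (-1 : ℝ) 1
    · rw [indicator_of_mem hx, sub_zero]
      have hsq : clippedInv d x * x ^ 2 ≤ 1 := clippedInv_mul_sq_le.trans (abs_le.2 hx)
      have := mul_le_mul_of_nonneg_left (phi_zero_mul_one_sub_le x) hclip
      nlinarith [phi_pos 0]
    · rw [indicator_of_notMem hx]
      exact mul_nonneg hclip (phi_pos _).le
  have hI : IntegrableOn (fun x => phi 0 * (clippedInv d x - 1 / 2)) (Icc (-1) 1) :=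
    ((integrableOn_clippedInv_Icc d.cast_nonneg _ _).sub (integrableOn_const (by simp))).const_mul _
  calc 2 * phi 0 * log d ≤ phi 0 * (2 * (1 + log d) - 1) := by nlinarith [phi_pos 0]
    _ = ∫ x in Icc (-1) 1, phi 0 * (clippedInv d x - 1 / 2) := by
      rw [integral_const_mul, integral_sub (integrableOn_clippedInv_Icc d.cast_nonneg _ _)
        (integrableOn_const (by simp)), setIntegral_clippedInv_Icc hd', setIntegral_const]
      norm_num
    _ ≤ ∫ x, clippedInv d x * phi (x - 0) := by
      rw [← integral_indicator measurableSet_Icc]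
      exact integral_mono (hI.integrable_indicator measurableSet_Icc)
        (integrable_clippedInv_mul_phi d 0) hpt
    _ = tmu d 0 := (tmu_eq_integral_mul_phi d 0).symm

lemma tendsto_tmu_zero_div_log :
    Tendsto (fun d : ℕ => tmu d 0 / log d) atTop (𝓝 (√(2 / π))) := by
  rw [← two_mul_phi_zero]
  have hlog : Tendsto (fun d : ℕ => log d) atTop atTop :=
    tendsto_log_atTop.comp tendsto_natCast_atTop_atTop
  have hupper : Tendsto (fun d : ℕ => 2 * phi 0 + (2 * phi 0 + 1) / log d) atTop
      (𝓝 (2 * phi 0)) := by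
    simpa using tendsto_const_nhds.add (tendsto_const_nhds.div_atTop hlog)
  refine tendsto_of_tendsto_of_tendsto_of_le_of_le' tendsto_const_nhds hupper ?_ ?_
  · filter_upwards [hlog.eventually_gt_atTop 0, eventually_ge_atTop 1] with d hlogd hd
    rw [le_div_iff₀ hlogd]
    exact le_tmu_zero hd
  · filter_upwards [hlog.eventually_gt_atTop 0, eventually_ge_atTop 1] with d hlogd hd
    rw [div_le_iff₀ hlogd, add_mul, div_mul_cancel₀ _ hlogd.ne']
    exact tmu_le hd 0

lemma exists_tmu_le_mul_log :
    ∃ C : ℝ, 0 < C ∧ ∀ d : ℕ, 2 ≤ d → ∀ s : ℝ, tmu d s ≤ C * log d := by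
  have hlog2 : 0 < log 2 := log_pos one_lt_two
  refine ⟨2 * phi 0 + (2 * phi 0 + 1) / log 2, by positivity [phi_pos 0], fun d hd s => ?_⟩
  have hlogd : log 2 ≤ log d := log_le_log two_pos (by exact_mod_cast hd)
  have : 2 * phi 0 + 1 ≤ (2 * phi 0 + 1) / log 2 * log d := by
    rw [div_mul_eq_mul_div, le_div_iff₀ hlog2]
    exact mul_le_mul_of_nonneg_left hlogd (by linarith [phi_pos 0])
  linarith [tmu_le (one_le_two.trans hd) s]

theorem stmt17 :
    (∀ d : ℕ, 1 ≤ d →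
      (∀ s : ℝ, tmu d (-s) = tmu d s) ∧
      Continuous (tmu d) ∧
      StrictAntiOn (tmu d) (Set.Ici 0) ∧
      Filter.Tendsto (tmu d) Filter.atTop (nhds 0)) ∧
    Filter.Tendsto (fun d : ℕ => tmu d 0 / Real.log d) Filter.atTop
      (nhds (Real.sqrt (2 / Real.pi))) ∧
    (∃ C : ℝ, 0 < C ∧ ∀ d : ℕ, 2 ≤ d → ∀ s : ℝ, tmu d s ≤ C * Real.log d) :=
  ⟨fun d hd => ⟨tmu_neg d, continuous_tmu d, strictAntiOn_tmu hd, tendsto_tmu_atTop d⟩,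
    tendsto_tmu_zero_div_log, exists_tmu_le_mul_log⟩
end
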